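/- arXiv:1509.06203 — 8 statements merged into one kernel-verified Lean document; each statement's English description precedes it below -/
import Mathlib

section
/- Let R be a commutative ring in which the intersection of any two finitely generated ideals is finitely generated. Under the correspondence sending an ideal a of R to the order ideal {b ∈ Id_fg(R) | b ≤ a} of the lattice Id_fg(R) of finitely generated ideals, an ideal a of R is a maximal ideal of R if and only if the corresponding order ideal is maximal among proper order ideals of Id_fg(R) (an order ideal is proper if it is not all of Id_fg(R)). -/
/-- An *order ideal* of the poset of finitely generated ideals of `R`:
a nonempty set of finitely generated ideals that is downward closed
(within the finitely generated ideals) and closed under binary joins. -/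
def IsOrderIdealFG (R : Type*) [CommRing R] (A : Set (Ideal R)) : Prop :=
  A.Nonempty ∧ (∀ b ∈ A, b.FG) ∧
    (∀ b ∈ A, ∀ c : Ideal R, c.FG → c ≤ b → c ∈ A) ∧
    (∀ b ∈ A, ∀ c ∈ A, b ⊔ c ∈ A)

/-- Under the correspondence `a ↦ {b ∈ Id_fg(R) | b ≤ a}`, maximal ideals of `R`
correspond exactly to maximal proper order ideals of the lattice of finitely
generated ideals of `R`. -/
theorem isMaximal_iff_maximal_orderIdeal_of_fg (R : Type*) [CommRing R]
    (hcoh : ∀ I J : Ideal R, I.FG → J.FG → (I ⊓ J).FG) (a : Ideal R) :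
    a.IsMaximal ↔
      ({b : Ideal R | b.FG ∧ b ≤ a} ≠ {b : Ideal R | b.FG} ∧
        ∀ A : Set (Ideal R), IsOrderIdealFG R A → A ≠ {b : Ideal R | b.FG} →
          {b : Ideal R | b.FG ∧ b ≤ a} ⊆ A → A = {b : Ideal R | b.FG ∧ b ≤ a}) := by
  have htopfg : (⊤ : Ideal R).FG := ⟨{1}, by simp⟩
  constructor
  · intro hmax
    constructor
    · intro h
      have hmem : (⊤ : Ideal R) ∈ {b : Ideal R | b.FG ∧ b ≤ a} := by
        rw [h]; exact htopfg
      exact hmax.ne_top (top_le_iff.mp hmem.2)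
    · intro A hA hAne hsub
      refine subset_antisymm ?_ hsub
      intro c hc
      have hcfg := hA.2.1 c hc
      refine ⟨hcfg, ?_⟩
      by_contra hca
      have hsup : a ⊔ c = ⊤ := hmax.out.2 _ (left_lt_sup.mpr hca)
      have h1 : (1 : R) ∈ a ⊔ c := by rw [hsup]; trivial
      obtain ⟨x, hx, y, hy, hxy⟩ := Submodule.mem_sup.mp h1
      have hxA : Ideal.span {x} ∈ A :=
        hsub ⟨Submodule.fg_span_singleton x, (Ideal.span_singleton_le_iff_mem a).mpr hx⟩
      have hjoin : Ideal.span {x} ⊔ c ∈ A := hA.2.2.2 _ hxA _ hc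
      have hjt : Ideal.span {x} ⊔ c = ⊤ := by
        rw [Ideal.eq_top_iff_one]
        have : x + y ∈ Ideal.span {x} ⊔ c :=
          Submodule.add_mem_sup (Ideal.mem_span_singleton_self x) hy
        rwa [hxy] at this
      apply hAne
      ext d
      constructor
      · intro hd; exact hA.2.1 d hd
      · intro hd
        exact hA.2.2.1 _ hjoin d hd (by rw [hjt]; exact le_top)
  · rintro ⟨hne, hmax⟩
    have hna : a ≠ ⊤ := by
      intro h
      apply hne
      ext d
      simp only [Set.mem_setOf_eq, h, le_top, and_true]
    refine ⟨hna, fun b hab => ?_⟩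
    obtain ⟨x, hxb, hxa⟩ := SetLike.exists_of_lt hab
    set A : Set (Ideal R) := {c : Ideal R | c.FG ∧ c ≤ a ⊔ Ideal.span {x}} with hAdef
    have hAoi : IsOrderIdealFG R A := by
      refine ⟨⟨⊥, Submodule.fg_bot, bot_le⟩, fun b hb => hb.1, fun b hb c hcfg hcb => ⟨hcfg, hcb.trans hb.2⟩, fun b hb c hc => ⟨Submodule.FG.sup hb.1 hc.1, sup_le hb.2 hc.2⟩⟩
    have hsub : {b : Ideal R | b.FG ∧ b ≤ a} ⊆ A :=
      fun c hc => ⟨hc.1, hc.2.trans le_sup_left⟩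
    by_cases hAall : A = {b : Ideal R | b.FG}
    · -- then a ⊔ span{x} = ⊤ ≤ b
      have : (⊤ : Ideal R) ∈ A := by rw [hAall]; exact htopfg
      have htop : a ⊔ Ideal.span {x} = ⊤ := top_le_iff.mp this.2
      have hle : a ⊔ Ideal.span {x} ≤ b :=
        sup_le hab.le ((Ideal.span_singleton_le_iff_mem b).mpr hxb)
      rw [htop] at hle
      exact top_le_iff.mp hle
    · exfalso
      have := hmax A hAoi hAall hsub
      have hxA : Ideal.span {x} ∈ A :=
        ⟨Submodule.fg_span_singleton x, le_sup_right⟩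
      rw [this] at hxA
      exact hxa (hxA.2 (Ideal.mem_span_singleton_self x))
end

section
/- Let I be a type, (K_i)_{i∈I} a family of fields, and R := ∏_{i∈I} K_i the product ring. For x ∈ R set Z(x) := {i ∈ I | x_i = 0}. Then the map sending a ring ideal a ⊆ R to 𝓕(a) := {Z(x) | x ∈ a} is a bijection from the set of ideals of R onto the set of filters on I, with inverse sending a filter 𝓕 on I to the ideal {x ∈ R | Z(x) ∈ 𝓕}. -/
/-- A filter of sets on `I`: a collection of subsets of `I` containing `I` itself,
closed under finite (binary) intersections and under taking supersets.
(The whole power set, containing `∅`, is allowed.) -/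
def IsSetFilter (I : Type*) (𝓕 : Set (Set I)) : Prop :=
  Set.univ ∈ 𝓕 ∧ (∀ A ∈ 𝓕, ∀ B ∈ 𝓕, A ∩ B ∈ 𝓕) ∧ (∀ A ∈ 𝓕, ∀ B : Set I, A ⊆ B → B ∈ 𝓕)

open Classical in
/-- Key absorption lemma: membership in an ideal of a product of fields only
depends on the zero set. -/
lemma mem_of_zeroset_subset {I : Type*} {K : I → Type*} [∀ i, Field (K i)]
    (a : Ideal (∀ i, K i)) {x y : ∀ i, K i} (hx : x ∈ a)
    (h : ∀ i, x i = 0 → y i = 0) : y ∈ a := by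
  have hxy : y = (fun i => if x i = 0 then 0 else y i * (x i)⁻¹) * x := by
    funext i
    by_cases hxi : x i = 0
    · simp [hxi, h i hxi]
    · simp [hxi, Pi.mul_apply, mul_assoc, inv_mul_cancel₀ hxi]
  rw [hxy]
  exact Ideal.mul_mem_left a _ hx

/-- For a product `R = ∏ i, K i` of fields, the map sending an ideal `a ⊆ R` to
`{Z x | x ∈ a}` where `Z x = {i | x i = 0}` is a bijection from the ideals of `R`
onto the filters of sets on `I`, with inverse sending a filter `𝓕` to the ideal
`{x | Z x ∈ 𝓕}`. -/
theorem ideals_biject_filters_of_pi_fields (I : Type*) (K : I → Type*)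
    [∀ i, Field (K i)] :
    (∀ a : Ideal (∀ i, K i),
        IsSetFilter I {S : Set I | ∃ x ∈ a, {i : I | x i = 0} = S}) ∧
    (∀ a b : Ideal (∀ i, K i),
        {S : Set I | ∃ x ∈ a, {i : I | x i = 0} = S} =
          {S : Set I | ∃ x ∈ b, {i : I | x i = 0} = S} → a = b) ∧
    (∀ 𝓕 : Set (Set I), IsSetFilter I 𝓕 →
        ∃ a : Ideal (∀ i, K i),
          ((a : Set (∀ i, K i)) = {x : ∀ i, K i | {i : I | x i = 0} ∈ 𝓕}) ∧
          {S : Set I | ∃ x ∈ a, {i : I | x i = 0} = S} = 𝓕) := by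
  classical
  refine ⟨?_, ?_, ?_⟩
  · intro a
    refine ⟨⟨0, a.zero_mem, by ext i; simp⟩, ?_, ?_⟩
    · rintro A ⟨x, hx, rfl⟩ B ⟨y, hy, rfl⟩
      -- idempotents
      set ex : ∀ i, K i := fun i => if x i = 0 then 0 else 1 with hex
      set ey : ∀ i, K i := fun i => if y i = 0 then 0 else 1 with hey
      have hxe : ex ∈ a := mem_of_zeroset_subset a hx (by intro i hi; simp [hex, hi])
      have hye : ey ∈ a := mem_of_zeroset_subset a hy (by intro i hi; simp [hey, hi])
      refine ⟨ex + ey - ex * ey, ?_, ?_⟩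
      · exact sub_mem (add_mem hxe hye) (Ideal.mul_mem_left a _ hye)
      · ext i
        by_cases hxi : x i = 0 <;> by_cases hyi : y i = 0 <;>
          simp [hex, hey, hxi, hyi]
    · rintro A ⟨x, hx, rfl⟩ B hAB
      refine ⟨fun i => if i ∈ B then 0 else 1, ?_, ?_⟩
      · refine mem_of_zeroset_subset a hx ?_
        intro i hi
        simp [hAB hi]
      · ext i
        by_cases hi : i ∈ B <;> simp [hi]
  · intro a b hab
    have key : ∀ (a b : Ideal (∀ i, K i)),
        {S : Set I | ∃ x ∈ a, {i : I | x i = 0} = S} ⊆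
          {S : Set I | ∃ x ∈ b, {i : I | x i = 0} = S} → a ≤ b := by
      intro a b h x hx
      obtain ⟨y, hy, hyx⟩ := h ⟨x, hx, rfl⟩
      refine mem_of_zeroset_subset b hy ?_
      intro i hi
      have : i ∈ {i : I | x i = 0} := hyx ▸ hi
      exact this
    exact le_antisymm (key a b hab.le) (key b a hab.ge)
  · intro 𝓕 ⟨huniv, hinter, hsup⟩
    refine ⟨{ carrier := {x : ∀ i, K i | {i : I | x i = 0} ∈ 𝓕}
              zero_mem' := by simpa using huniv
              add_mem' := by
                intro x y hx hy
                refine hsup _ (hinter _ hx _ hy) _ ?_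
                rintro i ⟨h1, h2⟩
                simp only [Set.mem_setOf_eq] at h1 h2 ⊢
                simp [h1, h2]
              smul_mem' := by
                intro c x hx
                refine hsup _ hx _ ?_
                intro i hi
                simp only [Set.mem_setOf_eq] at hi ⊢
                simp [hi] }, rfl, ?_⟩
    ext S
    constructor
    · rintro ⟨x, hx, rfl⟩
      exact hx
    · intro hS
      refine ⟨fun i => if i ∈ S then 0 else 1, ?_, ?_⟩
      · show {i : I | (if i ∈ S then (0:K i) else 1) = 0} ∈ 𝓕
        have : {i : I | (if i ∈ S then (0:K i) else 1) = 0} = S := by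
          ext i; by_cases hi : i ∈ S <;> simp [hi]
        rw [this]; exact hS
      · ext i; by_cases hi : i ∈ S <;> simp [hi]
end

section
/- Let I be a type, (K_i)_{i∈I} a family of fields, and R := ∏_{i∈I} K_i. For x ∈ R set Z(x) := {i ∈ I | x_i = 0}. Under the bijection a ↦ 𝓕(a) = {Z(x) | x ∈ a} between ideals of R and filters on I, an ideal a is a maximal ideal of R if and only if 𝓕(a) is an ultrafilter on I (a proper filter, not containing ∅, that is maximal under inclusion among proper filters; equivalently, for every subset S ⊆ I either S ∈ 𝓕(a) or its complement lies in 𝓕(a)). -/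
/-- An ultrafilter of sets on `I`: a proper filter (not containing `∅`) that is
maximal under inclusion among proper filters. -/
def IsUltraSetFilter (I : Type*) (𝓕 : Set (Set I)) : Prop :=
  IsSetFilter I 𝓕 ∧ (∅ : Set I) ∉ 𝓕 ∧
    ∀ 𝓖 : Set (Set I), IsSetFilter I 𝓖 → (∅ : Set I) ∉ 𝓖 → 𝓕 ⊆ 𝓖 → 𝓖 = 𝓕

/-!
An ideal of `∏ i, K i` is determined by the zero sets of its elements: if `x ∈ a` and
`y` vanishes wherever `x` does, then `y = (y * x⁻¹) * x ∈ a`. Conversely every filter `𝓖`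
on `I` gives the ideal `{x | Z x ∈ 𝓖}`, and the two constructions are mutually inverse
order isomorphisms between ideals and filters that match `⊤` with the filters containing `∅`.
Maximal proper ideals therefore correspond to maximal proper filters.
-/

namespace PiFields

variable {I : Type*} {K : I → Type*}

section Semiring

variable [∀ i, Semiring (K i)]

def zeroSet (x : ∀ i, K i) : Set I := {i | x i = 0}

@[simp]
lemma mem_zeroSet {x : ∀ i, K i} {i : I} : i ∈ zeroSet x ↔ x i = 0 := Iff.rfl

def zeroSetFilter (a : Ideal (∀ i, K i)) : Set (Set I) := zeroSet '' (a : Set (∀ i, K i))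

lemma exists_zeroSet_eq [∀ i, Nontrivial (K i)] (S : Set I) :
    ∃ x : ∀ i, K i, zeroSet x = S := by
  classical
  refine ⟨fun i => if i ∈ S then 0 else 1, ?_⟩
  ext i
  by_cases hi : i ∈ S <;> simp [hi]

lemma zeroSetFilter_subset_of_le {a b : Ideal (∀ i, K i)} (hab : a ≤ b) :
    zeroSetFilter a ⊆ zeroSetFilter b :=
  Set.image_mono hab

lemma inter_zeroSet_mem_zeroSetFilter (a : Ideal (∀ i, K i)) {x y : ∀ i, K i}
    (hx : x ∈ a) (hy : y ∈ a) : zeroSet x ∩ zeroSet y ∈ zeroSetFilter a := by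
  classical
  -- equal to `x i` where `x i ≠ 0` and to `y i` where `x i = 0`
  let z : ∀ i, K i :=
    (fun i => if x i = 0 then 0 else 1) * x + (fun i => if x i = 0 then 1 else 0) * y
  refine ⟨z, a.add_mem (a.mul_mem_left _ hx) (a.mul_mem_left _ hy), ?_⟩
  ext i
  by_cases hxi : x i = 0 <;> simp [z, hxi]

def ofSetFilter {𝓖 : Set (Set I)} (h𝓖 : IsSetFilter I 𝓖) : Ideal (∀ i, K i) where
  carrier := {x | zeroSet x ∈ 𝓖}
  zero_mem' := by simpa [zeroSet] using h𝓖.1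
  add_mem' {x y} hx hy := h𝓖.2.2 _ (h𝓖.2.1 _ hx _ hy) _ fun i ⟨hxi, hyi⟩ => by
    simp_all
  smul_mem' c x hx := h𝓖.2.2 _ hx _ fun i hxi => by simp_all

lemma zeroSetFilter_ofSetFilter [∀ i, Nontrivial (K i)] {𝓖 : Set (Set I)}
    (h𝓖 : IsSetFilter I 𝓖) : zeroSetFilter (ofSetFilter (K := K) h𝓖) = 𝓖 := by
  ext S
  constructor
  · rintro ⟨x, hx, rfl⟩
    exact hx
  · intro hS
    obtain ⟨x, hx⟩ := exists_zeroSet_eq (K := K) S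
    exact ⟨x, show zeroSet x ∈ 𝓖 from hx ▸ hS, hx⟩

end Semiring

section DivisionRing

variable [∀ i, DivisionRing (K i)]

lemma mem_of_zeroSet_subset {a : Ideal (∀ i, K i)} {x y : ∀ i, K i} (hx : x ∈ a)
    (hxy : zeroSet x ⊆ zeroSet y) : y ∈ a := by
  have hy : y = (y * x⁻¹) * x := by
    ext i
    by_cases hxi : x i = 0
    · simp [hxi, show y i = 0 from hxy hxi]
    · simp [hxi]
  rw [hy]
  exact a.mul_mem_left _ hx

lemma le_of_zeroSetFilter_subset {a b : Ideal (∀ i, K i)}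
    (hab : zeroSetFilter a ⊆ zeroSetFilter b) : a ≤ b := fun x hx => by
  obtain ⟨y, hy, hyx⟩ := hab ⟨x, hx, rfl⟩
  exact mem_of_zeroSet_subset hy hyx.subset

lemma isSetFilter_zeroSetFilter (a : Ideal (∀ i, K i)) : IsSetFilter I (zeroSetFilter a) := by
  refine ⟨⟨0, a.zero_mem, by ext; simp⟩, ?_, ?_⟩
  · rintro _ ⟨x, hx, rfl⟩ _ ⟨y, hy, rfl⟩
    exact inter_zeroSet_mem_zeroSetFilter a hx hy
  · rintro _ ⟨x, hx, rfl⟩ B hB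
    obtain ⟨y, rfl⟩ := exists_zeroSet_eq (K := K) B
    exact ⟨y, mem_of_zeroSet_subset hx hB, rfl⟩

lemma empty_mem_zeroSetFilter_iff {a : Ideal (∀ i, K i)} :
    ∅ ∈ zeroSetFilter a ↔ a = ⊤ := by
  have hone : zeroSet (1 : ∀ i, K i) = ∅ := by ext; simp
  constructor
  · rintro ⟨x, hx, hx0⟩
    exact (Ideal.eq_top_iff_one a).2 (mem_of_zeroSet_subset hx (by simp [hx0]))
  · rintro rfl
    exact ⟨1, Submodule.mem_top, hone⟩

end DivisionRing

end PiFields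

open PiFields in
/-- For a product `R = ∏ i, K i` of fields, under the correspondence
`a ↦ {Z x | x ∈ a}` (where `Z x = {i | x i = 0}`) between ideals of `R` and filters
on `I`, an ideal `a` is maximal if and only if the corresponding filter is an
ultrafilter on `I`. -/
theorem isMaximal_iff_ultrafilter_of_pi_fields (I : Type*) (K : I → Type*)
    [∀ i, Field (K i)] (a : Ideal (∀ i, K i)) :
    a.IsMaximal ↔ IsUltraSetFilter I {S : Set I | ∃ x ∈ a, {i : I | x i = 0} = S} := by
  change a.IsMaximal ↔ IsUltraSetFilter I (zeroSetFilter a)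
  rw [Ideal.isMaximal_def]
  constructor
  · intro ha
    refine ⟨isSetFilter_zeroSetFilter a, mt empty_mem_zeroSetFilter_iff.1 ha.1, ?_⟩
    intro 𝓖 h𝓖 h𝓖ne ha𝓖
    rw [← zeroSetFilter_ofSetFilter (K := K) h𝓖] at h𝓖ne ha𝓖 ⊢
    have hb : ofSetFilter h𝓖 ≠ ⊤ := mt empty_mem_zeroSetFilter_iff.2 h𝓖ne
    have hab := le_of_zeroSetFilter_subset ha𝓖
    rw [(ha.le_iff.1 hab).resolve_left hb]
  · rintro ⟨-, hane, hmax⟩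
    refine ⟨mt empty_mem_zeroSetFilter_iff.2 hane, fun b hab => ?_⟩
    by_contra hb
    have hba := hmax _ (isSetFilter_zeroSetFilter b) (mt empty_mem_zeroSetFilter_iff.1 hb)
      (zeroSetFilter_subset_of_le hab.le)
    exact hab.not_ge (le_of_zeroSetFilter_subset hba.subset)
end

section
/- An order filter F on D = M →₀ ℕ is a prime filter if and only if Supp(F) is a prime order filter on L = Finset M. -/
/-- An order filter on a lattice `P`: a nonempty subset that is upward closed and
closed under binary meets. -/
def IsOrderFilter {P : Type*} [Lattice P] (F : Set P) : Prop :=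
  F.Nonempty ∧ (∀ a ∈ F, ∀ b : P, a ≤ b → b ∈ F) ∧ (∀ a ∈ F, ∀ b ∈ F, a ⊓ b ∈ F)

/-- A prime order filter on a lattice `P`: a proper order filter `F` such that
`a ⊔ b ∈ F` implies `a ∈ F` or `b ∈ F`. -/
def IsPrimeOrderFilter {P : Type*} [Lattice P] (F : Set P) : Prop :=
  IsOrderFilter F ∧ F ≠ Set.univ ∧ ∀ a b : P, a ⊔ b ∈ F → a ∈ F ∨ b ∈ F

/-- A maximal order filter on a lattice `P`: a proper order filter that is maximal
under inclusion among proper order filters. -/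
def IsMaximalOrderFilter {P : Type*} [Lattice P] (F : Set P) : Prop :=
  IsOrderFilter F ∧ F ≠ Set.univ ∧
    ∀ G : Set P, IsOrderFilter G → G ≠ Set.univ → F ⊆ G → G = F

/-- The characteristic function `ch S : M →₀ ℕ` of a finite set `S`,
with `(ch S) m = 1` if `m ∈ S` and `0` otherwise. -/
noncomputable def chFun {M : Type*} (S : Finset M) : M →₀ ℕ :=
  Finsupp.indicator S (fun _ _ => 1)

/-- `Supp F = {supp f | f ∈ F}`, where `supp f = {m | f m ≠ 0}` is the support of
a finitely supported function `f : M →₀ ℕ`. -/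
def SuppFilter {M : Type*} (F : Set (M →₀ ℕ)) : Set (Finset M) :=
  Finsupp.support '' F

/-- `Ch 𝒮 = {f : M →₀ ℕ | ∃ S ∈ 𝒮, ch S ≤ f}`. -/
noncomputable def ChFilter {M : Type*} (𝒮 : Set (Finset M)) : Set (M →₀ ℕ) :=
  {f : M →₀ ℕ | ∃ S ∈ 𝒮, chFun S ≤ f}


/-!
`Supp` turns `⊓`, `⊔` and `⊥` of `M →₀ ℕ` into `∩`, `∪` and `∅`, so `Supp F` is an order filter,
proper exactly when `F` is. If `F` is prime and `f ∈ F` has support `S ∪ T`, then `f` is the join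
of its restrictions to `S` and `T`, one of which lies in `F`. Conversely a proper prime filter of
finite sets contains a singleton `{m}`; then `F` contains an element supported at `m`, and this
forces membership in `F` to depend only on the value at `m`, which `f ⊔ g` shares with `f` or `g`.
-/

section Lattice

variable {P : Type*} [Lattice P]

theorem IsOrderFilter.eq_univ_iff_bot_mem [OrderBot P] {F : Set P} (hF : IsOrderFilter F) :
    F = Set.univ ↔ ⊥ ∈ F :=
  ⟨fun h => h ▸ Set.mem_univ ⊥,
    fun h => Set.eq_univ_of_forall fun a => hF.2.1 ⊥ h a bot_le⟩

theorem exists_mem_of_finset_sup_mem [OrderBot P] {F : Set P} (hbot : ⊥ ∉ F)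
    (hprime : ∀ a b : P, a ⊔ b ∈ F → a ∈ F ∨ b ∈ F) {ι : Type*} (f : ι → P) (s : Finset ι)
    (hs : s.sup f ∈ F) : ∃ i ∈ s, f i ∈ F := by
  induction s using Finset.cons_induction with
  | empty => exact absurd hs hbot
  | cons i s hi ih =>
    rw [Finset.sup_cons] at hs
    rcases hprime _ _ hs with h | h
    · exact ⟨i, Finset.mem_cons_self i s, h⟩
    · obtain ⟨j, hj, hjF⟩ := ih h
      exact ⟨j, Finset.mem_cons_of_mem hj, hjF⟩

end Lattice

theorem exists_singleton_mem_of_isPrimeOrderFilter {M : Type*} [DecidableEq M]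
    {𝒮 : Set (Finset M)} (h𝒮 : IsPrimeOrderFilter 𝒮) : ∃ m, {m} ∈ 𝒮 := by
  obtain ⟨hfilter, hproper, hprime⟩ := h𝒮
  have hempty : (∅ : Finset M) ∉ 𝒮 := fun h => hproper (hfilter.eq_univ_iff_bot_mem.2 h)
  obtain ⟨S, hS⟩ := hfilter.1
  obtain ⟨m, -, hm⟩ := exists_mem_of_finset_sup_mem hempty hprime singleton S
    ((Finset.sup_singleton_eq_self S).symm ▸ hS)
  exact ⟨m, hm⟩

theorem support_chFun {M : Type*} [DecidableEq M] (S : Finset M) : (chFun S).support = S := by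
  ext m
  by_cases h : m ∈ S <;> simp [chFun, Finsupp.indicator_apply, h]

theorem Finsupp.le_filter_sup_filter {M α : Type*} [AddCommMonoid α] [LinearOrder α]
    [IsBotZeroClass α] [DecidableEq M] {f : M →₀ α} {S T : Finset M}
    (hf : f.support ⊆ S ∪ T) : f ≤ f.filter (· ∈ S) ⊔ f.filter (· ∈ T) := by
  intro m
  simp only [Finsupp.sup_apply, Finsupp.filter_apply]
  by_cases hS : m ∈ S
  · simp [hS]
  by_cases hT : m ∈ T
  · simp [hT]
  · have : f m = 0 := Finsupp.notMem_support_iff.1 fun h => by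
      simpa [hS, hT] using hf h
    simp [this]

theorem IsOrderFilter.mem_of_apply_le {M α : Type*} [AddCommMonoid α] [LinearOrder α]
    [IsBotZeroClass α] {F : Set (M →₀ α)} (hF : IsOrderFilter F) {k h f : M →₀ α} {m : M}
    (hk : k ∈ F) (hks : k.support ⊆ {m}) (hh : h ∈ F) (hle : h m ≤ f m) : f ∈ F := by
  -- `h ⊓ (f ⊔ k) ∈ F` lies below `f`: at `m` it is at most `h m`, elsewhere `k` vanishes.
  refine hF.2.1 (h ⊓ (f ⊔ k)) (hF.2.2 h hh _ (hF.2.1 k hk _ le_sup_right)) f fun x => ?_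
  rw [Finsupp.inf_apply]
  by_cases hx : x = m
  · exact hx ▸ inf_le_left.trans hle
  · have hkx : k x = 0 :=
      Finsupp.notMem_support_iff.1 fun hx' => hx (Finset.mem_singleton.1 (hks hx'))
    simp [hkx]

section SuppFilter

variable {M : Type*} {F : Set (M →₀ ℕ)}

theorem empty_mem_suppFilter_iff : ∅ ∈ SuppFilter F ↔ (0 : M →₀ ℕ) ∈ F := by
  simp [SuppFilter, Finsupp.support_eq_empty]

theorem IsOrderFilter.suppFilter [DecidableEq M] (hF : IsOrderFilter F) :
    IsOrderFilter (SuppFilter F) := by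
  obtain ⟨⟨f, hf⟩, hup, hmeet⟩ := hF
  refine ⟨⟨f.support, f, hf, rfl⟩, ?_, ?_⟩
  · rintro _ ⟨f, hf, rfl⟩ T hfT
    refine ⟨f ⊔ chFun T, hup f hf _ le_sup_left, ?_⟩
    rw [Finsupp.support_sup, support_chFun, Finset.union_eq_right.2 hfT]
  · rintro _ ⟨f, hf, rfl⟩ _ ⟨g, hg, rfl⟩
    exact ⟨f ⊓ g, hmeet f hf g hg, Finsupp.support_inf f g⟩

theorem IsOrderFilter.suppFilter_eq_univ_iff [DecidableEq M] (hF : IsOrderFilter F) :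
    SuppFilter F = Set.univ ↔ F = Set.univ := by
  rw [hF.suppFilter.eq_univ_iff_bot_mem, hF.eq_univ_iff_bot_mem, Finset.bot_eq_empty, bot_eq_zero,
    empty_mem_suppFilter_iff]

theorem IsOrderFilter.mem_or_mem_suppFilter_of_sup_mem [DecidableEq M] (hF : IsOrderFilter F)
    (hprime : ∀ f g : M →₀ ℕ, f ⊔ g ∈ F → f ∈ F ∨ g ∈ F) {S T : Finset M}
    (hST : S ⊔ T ∈ SuppFilter F) : S ∈ SuppFilter F ∨ T ∈ SuppFilter F := by
  obtain ⟨f, hf, hfST⟩ := hST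
  have hsupport (U : Finset M) : (f.filter (· ∈ U)).support ⊆ U := fun x hx => by
    simp only [Finsupp.support_filter, Finset.mem_filter] at hx
    exact hx.2
  have hup := hF.suppFilter.2.1
  rcases hprime _ _ (hF.2.1 f hf _ (Finsupp.le_filter_sup_filter hfST.le)) with h | h
  · exact .inl (hup _ ⟨_, h, rfl⟩ S (hsupport S))
  · exact .inr (hup _ ⟨_, h, rfl⟩ T (hsupport T))

theorem IsOrderFilter.mem_or_mem_of_isPrimeOrderFilter_suppFilter [DecidableEq M]
    (hF : IsOrderFilter F) (hS : IsPrimeOrderFilter (SuppFilter F)) (f g : M →₀ ℕ)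
    (hfg : f ⊔ g ∈ F) : f ∈ F ∨ g ∈ F := by
  obtain ⟨m, k, hk, hks⟩ := exists_singleton_mem_of_isPrimeOrderFilter hS
  rcases le_total (g m) (f m) with hle | hle
  · exact .inl (hF.mem_of_apply_le hk hks.subset hfg (sup_le le_rfl hle))
  · exact .inr (hF.mem_of_apply_le hk hks.subset hfg (sup_le hle le_rfl))

end SuppFilter

/-- An order filter `F` on `D = M →₀ ℕ` is a prime filter if and only if `Supp F`
is a prime order filter on `L = Finset M`. -/
theorem isPrime_iff_suppFilter_isPrime (M : Type*) [DecidableEq M]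
    (F : Set (M →₀ ℕ)) (hF : IsOrderFilter F) :
    IsPrimeOrderFilter F ↔ IsPrimeOrderFilter (SuppFilter F) := by
  refine ⟨fun ⟨_, hproper, hprime⟩ => ⟨hF.suppFilter, ?_, ?_⟩,
    fun hS => ⟨hF, ?_, hF.mem_or_mem_of_isPrimeOrderFilter_suppFilter hS⟩⟩
  · exact hF.suppFilter_eq_univ_iff.not.2 hproper
  · exact fun S T => hF.mem_or_mem_suppFilter_of_sup_mem hprime
  · exact hF.suppFilter_eq_univ_iff.not.1 hS.2.1
end

section
/- A proper order filter F on D = M →₀ ℕ is a prime filter if and only if F is contained in exactly one maximal filter on D; and when F is prime, the unique maximal filter containing F is Ch(Supp(F)). -/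
/-!
Since `M →₀ ℕ` is a well-founded lattice with bottom `0`, every order filter is principal,
`F = Ici g`, and `F` is proper iff `g ≠ 0`. The maximal filters are the `Ici a` with `a` an
atom, i.e. `a = single m 1`, so the maximal filters containing `Ici g` are indexed by the
support of `g`. On the other hand `Ici g` is prime iff `g` is sup-prime, which for a
finitely supported function means that its support is a singleton `{m}`; in that case
`Ch (Supp (Ici g)) = Ici (ch {m}) = Ici (single m 1)`.
-/

open Set Finsupp

section OrderFilter

variable {P : Type*} [Lattice P]

lemma isOrderFilter_Ici (a : P) : IsOrderFilter (Ici a) :=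
  ⟨nonempty_Ici, fun _ ha _ hab => ha.trans hab, fun _ ha _ hb => le_inf ha hb⟩

/-- A minimal element `a` of `F` is its minimum, since `a ⊓ x ∈ F` cannot lie strictly
below `a`. -/
lemma IsOrderFilter.exists_eq_Ici [WellFoundedLT P] {F : Set P} (hF : IsOrderFilter F) :
    ∃ a, F = Ici a := by
  obtain ⟨a, haF, hmin⟩ := wellFounded_lt.has_min F hF.1
  refine ⟨a, Subset.antisymm (fun x hx => ?_) (fun x hax => hF.2.1 a haF x hax)⟩
  have hinf : a ⊓ x = a :=
    (inf_le_left.lt_or_eq).resolve_left (hmin _ (hF.2.2 a haF x hx))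
  exact inf_eq_left.1 hinf

lemma IsOrderFilter.eq_univ_of_bot_mem [OrderBot P] {F : Set P} (hF : IsOrderFilter F)
    (hbot : ⊥ ∈ F) : F = univ :=
  eq_univ_of_forall fun x => hF.2.1 ⊥ hbot x bot_le

lemma Ici_ne_univ_iff [OrderBot P] {a : P} : Ici a ≠ univ ↔ a ≠ ⊥ :=
  not_congr ⟨fun h => le_bot_iff.1 (h ▸ mem_univ ⊥ : ⊥ ∈ Ici a), fun h => h ▸ Ici_bot⟩

lemma isPrimeOrderFilter_Ici_iff [OrderBot P] {a : P} :
    IsPrimeOrderFilter (Ici a) ↔ SupPrime a := by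
  simp only [IsPrimeOrderFilter, SupPrime, isOrderFilter_Ici, Ici_ne_univ_iff, isMin_iff_eq_bot,
    mem_Ici, true_and]

lemma isMaximalOrderFilter_Ici_iff [OrderBot P] {a : P} :
    IsMaximalOrderFilter (Ici a) ↔ IsAtom a := by
  refine ⟨fun ⟨_, hne, hmax⟩ => ⟨Ici_ne_univ_iff.1 hne, fun b hba => ?_⟩,
    fun ha => ⟨isOrderFilter_Ici a, Ici_ne_univ_iff.2 ha.1, fun G hG hGne haG => ?_⟩⟩
  · by_contra hb
    exact hba.ne' (Ici_inj.1
      (hmax _ (isOrderFilter_Ici b) (Ici_ne_univ_iff.2 hb) (Ici_subset_Ici.2 hba.le))).symm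
  · refine Subset.antisymm (fun x hx => ?_) haG
    -- `a ⊓ x ∈ G` lies below the atom `a`, and it is not `⊥` because `G` is proper
    rcases ha.le_iff.1 (inf_le_left : a ⊓ x ≤ a) with hbot | htop
    · exact absurd (hG.eq_univ_of_bot_mem (hbot ▸ hG.2.2 a (haG le_rfl) x hx)) hGne
    · exact inf_eq_left.1 htop

lemma setOf_isMaximalOrderFilter_Ici_subset [WellFoundedLT P] [OrderBot P] (g : P) :
    {G | IsMaximalOrderFilter G ∧ Ici g ⊆ G} = Ici '' {a | IsAtom a ∧ a ≤ g} := by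
  ext G
  constructor
  · rintro ⟨hG, hgG⟩
    obtain ⟨a, rfl⟩ := hG.1.exists_eq_Ici
    exact ⟨a, ⟨isMaximalOrderFilter_Ici_iff.1 hG, Ici_subset_Ici.1 hgG⟩, rfl⟩
  · rintro ⟨a, ⟨ha, hag⟩, rfl⟩
    exact ⟨isMaximalOrderFilter_Ici_iff.2 ha, Ici_subset_Ici.2 hag⟩

end OrderFilter

lemma Function.Injective.existsUnique_mem_image_iff {α β : Type*} {f : α → β}
    (hf : Function.Injective f) {s : Set α} : (∃! b, b ∈ f '' s) ↔ ∃! a, a ∈ s := by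
  refine ⟨fun ⟨_, ⟨a, ha, rfl⟩, huniq⟩ => ⟨a, ha, fun a' ha' => hf (huniq _ ⟨a', ha', rfl⟩)⟩,
    fun ⟨a, ha, huniq⟩ => ⟨f a, ⟨a, ha, rfl⟩, ?_⟩⟩
  rintro _ ⟨a', ha', rfl⟩
  rw [huniq a' ha']

namespace Finsupp

variable {M : Type*}

lemma single_one_le_iff {m : M} {f : M →₀ ℕ} : single m 1 ≤ f ↔ m ∈ f.support := by
  rw [single_le_iff, Nat.one_le_iff_ne_zero, mem_support_iff]

lemma isAtom_single_one (m : M) : IsAtom (single m (1 : ℕ)) := by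
  refine ⟨single_ne_zero.2 one_ne_zero, fun b hb => ?_⟩
  by_contra hb0
  obtain ⟨m', hm'⟩ := support_nonempty_iff.2 hb0
  have hm'm : m' = m := by
    by_contra hne
    simpa [single_eq_of_ne hne] using single_one_le_iff.2 (support_mono hb.le hm')
  exact hb.not_ge (hm'm ▸ single_one_le_iff.2 hm')

lemma isAtom_iff {a : M →₀ ℕ} : IsAtom a ↔ ∃ m, a = single m 1 := by
  refine ⟨fun ha => ?_, fun ⟨m, hm⟩ => hm ▸ isAtom_single_one m⟩
  obtain ⟨m, hm⟩ := support_nonempty_iff.2 ha.1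
  exact ⟨m, ((ha.le_iff_eq (isAtom_single_one m).1).1 (single_one_le_iff.2 hm)).symm⟩

lemma setOf_isAtom_le (g : M →₀ ℕ) :
    {a | IsAtom a ∧ a ≤ g} = (fun m => single m 1) '' g.support := by
  ext a
  simp only [mem_ofPred_eq, isAtom_iff, mem_image, Finset.mem_coe]
  constructor
  · rintro ⟨⟨m, rfl⟩, hmg⟩
    exact ⟨m, single_one_le_iff.1 hmg, rfl⟩
  · rintro ⟨m, hm, rfl⟩
    exact ⟨⟨m, rfl⟩, single_one_le_iff.2 hm⟩

lemma not_le_erase {g : M →₀ ℕ} {m : M} (hm : m ∈ g.support) : ¬g ≤ g.erase m := fun h => by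
  simpa [mem_support_iff.1 hm] using h m

lemma supPrime_single {m : M} {k : ℕ} (hk : k ≠ 0) : SupPrime (single m k) := by
  refine ⟨fun h => single_ne_zero.2 hk (isMin_iff_eq_bot.1 h), fun b c hbc => ?_⟩
  simpa only [single_le_iff, sup_apply, le_sup_iff] using hbc

lemma supPrime_iff {g : M →₀ ℕ} : SupPrime g ↔ ∃ m, g.support = {m} := by
  refine ⟨fun hg => ?_, fun ⟨m, hm⟩ => ?_⟩
  · obtain ⟨m, hm⟩ := support_nonempty_iff.2 hg.ne_bot
    refine ⟨m, Finset.eq_singleton_iff_unique_mem.2 ⟨hm, fun m' hm' => ?_⟩⟩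
    by_contra hne
    -- each coordinate of `g` survives in one of the two erasures
    have hle : g ≤ g.erase m ⊔ g.erase m' := fun x => by
      rcases eq_or_ne x m with rfl | hx
      · simp [erase_ne (Ne.symm hne)]
      · simp [erase_ne hx]
    exact (hg.le_sup.1 hle).elim (not_le_erase hm) (not_le_erase hm')
  · obtain ⟨hgm, hg⟩ := support_eq_singleton.1 hm
    exact hg ▸ supPrime_single hgm

end Finsupp

section ChFilter

variable {M : Type*}

lemma chFun_apply [DecidableEq M] (S : Finset M) (m : M) :
    chFun S m = if m ∈ S then 1 else 0 := by
  simp [chFun, Finsupp.indicator_apply]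

lemma chFun_mono : Monotone (chFun (M := M)) := fun S T hST m => by
  classical
  simp only [chFun_apply]
  split_ifs <;> simp_all [Finset.subset_iff]

lemma chFun_singleton (m : M) : chFun {m} = single m 1 := by
  classical
  ext x
  simp [chFun_apply, single_apply, eq_comm]

lemma chFilter_suppFilter_Ici (g : M →₀ ℕ) :
    ChFilter (SuppFilter (Ici g)) = Ici (chFun g.support) := by
  ext f
  simp only [ChFilter, SuppFilter, mem_ofPred_eq, mem_image, mem_Ici]
  refine ⟨?_, fun hf => ⟨g.support, ⟨g, le_rfl, rfl⟩, hf⟩⟩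
  rintro ⟨_, ⟨h, hgh, rfl⟩, hf⟩
  exact (chFun_mono (support_mono hgh)).trans hf

end ChFilter

theorem isPrime_iff_unique_maximal_general (M : Type*)
    (F : Set (M →₀ ℕ)) (hF : IsOrderFilter F) :
    (IsPrimeOrderFilter F ↔
      (∃! G : Set (M →₀ ℕ), IsMaximalOrderFilter G ∧ F ⊆ G)) ∧
    (IsPrimeOrderFilter F →
      IsMaximalOrderFilter (ChFilter (SuppFilter F)) ∧
      F ⊆ ChFilter (SuppFilter F) ∧
      ∀ G : Set (M →₀ ℕ), IsMaximalOrderFilter G → F ⊆ G →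
        G = ChFilter (SuppFilter F)) := by
  obtain ⟨g, rfl⟩ := hF.exists_eq_Ici
  have hmax (G : Set (M →₀ ℕ)) :
      IsMaximalOrderFilter G ∧ Ici g ⊆ G ↔ G ∈ (fun m => Ici (single m 1)) '' g.support := by
    rw [← image_image Ici, ← Finsupp.setOf_isAtom_le, ← setOf_isMaximalOrderFilter_Ici_subset]
    rfl
  have hprime : IsPrimeOrderFilter (Ici g) ↔ ∃ m, g.support = {m} := by
    rw [isPrimeOrderFilter_Ici_iff, Finsupp.supPrime_iff]
  have hinj : Function.Injective fun m : M => Ici (single m 1) :=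
    Ici_injective.comp (single_left_injective one_ne_zero)
  refine ⟨?_, fun hg => ?_⟩
  · rw [hprime, existsUnique_congr hmax, hinj.existsUnique_mem_image_iff,
      ← Finset.card_eq_one, Finset.card_eq_one_iff_existsUnique]
    rfl
  · obtain ⟨m, hm⟩ := hprime.1 hg
    simp only [hm, Finset.coe_singleton, image_singleton, mem_singleton_iff] at hmax
    rw [chFilter_suppFilter_Ici, hm, chFun_singleton]
    exact ⟨((hmax _).2 rfl).1, ((hmax _).2 rfl).2, fun G h1 h2 => (hmax G).1 ⟨h1, h2⟩⟩

/-- A proper order filter `F` on `D = M →₀ ℕ` is prime iff `F` is contained in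
exactly one maximal filter on `D`; when `F` is prime, the unique maximal filter
containing `F` is `Ch (Supp F)`. -/
theorem isPrime_iff_unique_maximal (M : Type*) [DecidableEq M]
    (F : Set (M →₀ ℕ)) (hF : IsOrderFilter F) (hproper : F ≠ Set.univ) :
    (IsPrimeOrderFilter F ↔
      (∃! G : Set (M →₀ ℕ), IsMaximalOrderFilter G ∧ F ⊆ G)) ∧
    (IsPrimeOrderFilter F →
      IsMaximalOrderFilter (ChFilter (SuppFilter F)) ∧
      F ⊆ ChFilter (SuppFilter F) ∧
      ∀ G : Set (M →₀ ℕ), IsMaximalOrderFilter G → F ⊆ G →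
        G = ChFilter (SuppFilter F)) :=
  isPrime_iff_unique_maximal_general M F hF
end

section
/- The maps Supp and Ch restrict to mutually inverse bijections between the set of maximal filters on D = M →₀ ℕ and the set of maximal filters on L = Finset M: if F is a maximal filter on D then Supp(F) is a maximal filter on L and Ch(Supp(F)) = F, and if 𝒮 is a maximal filter on L then Ch(𝒮) is a maximal filter on D and Supp(Ch(𝒮)) = 𝒮. -/
set_option linter.unusedSectionVars false

section Generic
variable {P : Type*} [Lattice P] [OrderBot P]

lemma filter_univ_of_bot {F : Set P} (hF : IsOrderFilter F) (h : ⊥ ∈ F) : F = Set.univ :=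
  Set.eq_univ_of_forall fun x => hF.2.1 ⊥ h x bot_le

lemma maximal_of_compl {F : Set P} (hF : IsOrderFilter F) (hproper : F ≠ Set.univ)
    (h : ∀ g ∉ F, ∃ f ∈ F, f ⊓ g = ⊥) : IsMaximalOrderFilter F := by
  refine ⟨hF, hproper, fun G hG hGp hFG => ?_⟩
  by_contra hne
  obtain ⟨g, hgG, hgF⟩ : ∃ g ∈ G, g ∉ F := by
    by_contra hc; push_neg at hc
    exact hne (Set.Subset.antisymm hc hFG)
  obtain ⟨f, hfF, hfg⟩ := h g hgF
  have : (⊥ : P) ∈ G := hfg ▸ hG.2.2 f (hFG hfF) g hgG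
  exact hGp (filter_univ_of_bot hG this)

lemma compl_of_maximal {F : Set P} (hF : IsMaximalOrderFilter F) :
    ∀ g ∉ F, ∃ f ∈ F, f ⊓ g = ⊥ := by
  intro g hg
  by_contra hc; push_neg at hc
  set G : Set P := {x | ∃ f ∈ F, f ⊓ g ≤ x} with hGdef
  obtain ⟨f0, hf0⟩ := hF.1.1
  have hFG : F ⊆ G := fun f hf => ⟨f, hf, inf_le_left⟩
  have hGfilter : IsOrderFilter G := by
    refine ⟨⟨f0 ⊓ g, f0, hf0, le_rfl⟩, ?_, ?_⟩
    · rintro x ⟨f, hf, hle⟩ y hxy; exact ⟨f, hf, hle.trans hxy⟩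
    · rintro x ⟨f1, hf1, h1⟩ y ⟨f2, hf2, h2⟩
      exact ⟨f1 ⊓ f2, hF.1.2.2 f1 hf1 f2 hf2,
        le_inf ((inf_le_inf_right g inf_le_left).trans h1)
          ((inf_le_inf_right g inf_le_right).trans h2)⟩
  have hGproper : G ≠ Set.univ := by
    intro h
    have : (⊥ : P) ∈ G := h ▸ Set.mem_univ _
    obtain ⟨f, hf, hle⟩ := this
    exact hc f hf (le_bot_iff.mp hle)
  have := hF.2.2 G hGfilter hGproper hFG
  exact hg (this ▸ ⟨f0, hf0, inf_le_right⟩)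

end Generic

section FinsuppLemmas
variable {M : Type*} [DecidableEq M]

lemma chFun_apply_mem {S : Finset M} {m : M} (h : m ∈ S) : chFun S m = 1 :=
  Finsupp.indicator_of_mem h _

lemma chFun_apply_notMem {S : Finset M} {m : M} (h : m ∉ S) : chFun S m = 0 :=
  Finsupp.indicator_of_notMem h _

lemma supp_chFun (S : Finset M) : (chFun S).support = S := by
  ext m
  rw [Finsupp.mem_support_iff]
  by_cases h : m ∈ S
  · simp [chFun_apply_mem h, h]
  · simp [chFun_apply_notMem h, h]

lemma chFun_le_iff {S : Finset M} {f : M →₀ ℕ} : chFun S ≤ f ↔ S ⊆ f.support := by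
  constructor
  · intro h m hm
    have := h m
    rw [chFun_apply_mem hm] at this
    rw [Finsupp.mem_support_iff]
    omega
  · intro h m
    by_cases hm : m ∈ S
    · rw [chFun_apply_mem hm]
      have := h hm
      rw [Finsupp.mem_support_iff] at this
      omega
    · rw [chFun_apply_notMem hm]; exact Nat.zero_le _

lemma finsupp_bot_eq : (⊥ : M →₀ ℕ) = 0 := rfl

lemma finset_bot_eq : (⊥ : Finset M) = ∅ := rfl

lemma inf_eq_bot_iff {f g : M →₀ ℕ} : f ⊓ g = ⊥ ↔ f.support ∩ g.support = ∅ := by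
  rw [finsupp_bot_eq, ← Finsupp.support_eq_empty, Finsupp.support_inf]

lemma mem_of_supp_subset {F : Set (M →₀ ℕ)} (hF : IsMaximalOrderFilter F)
    {f g : M →₀ ℕ} (hf : f ∈ F) (h : f.support ⊆ g.support) : g ∈ F := by
  by_contra hg
  obtain ⟨f', hf', hff'⟩ := compl_of_maximal hF g hg
  rw [inf_eq_bot_iff] at hff'
  have hmem : f ⊓ f' ∈ F := hF.1.2.2 f hf f' hf'
  have hsupp : (f ⊓ f').support = ∅ := by
    rw [Finsupp.support_inf]
    refine Finset.eq_empty_of_forall_notMem fun m hm => ?_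
    rw [Finset.mem_inter] at hm
    have : m ∈ g.support ∩ f'.support := Finset.mem_inter.mpr ⟨h hm.1, hm.2⟩
    rw [Finset.inter_comm] at hff'
    simp [hff'] at this
  rw [Finsupp.support_eq_empty] at hsupp
  exact hF.2.1 (filter_univ_of_bot hF.1 (by rw [finsupp_bot_eq, ← hsupp]; exact hmem))

end FinsuppLemmas


/-- `Supp` and `Ch` restrict to mutually inverse bijections between the maximal
filters on `D = M →₀ ℕ` and the maximal filters on `L = Finset M`. -/
theorem supp_ch_biject_maximal_filters (M : Type*) [DecidableEq M] :
    (∀ F : Set (M →₀ ℕ), IsMaximalOrderFilter F →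
      IsMaximalOrderFilter (SuppFilter F) ∧ ChFilter (SuppFilter F) = F) ∧
    (∀ 𝒮 : Set (Finset M), IsMaximalOrderFilter 𝒮 →
      IsMaximalOrderFilter (ChFilter 𝒮) ∧ SuppFilter (ChFilter 𝒮) = 𝒮) := by
  constructor
  · intro F hF
    have hfil : IsOrderFilter (SuppFilter F) := by
      refine ⟨hF.1.1.image _, ?_, ?_⟩
      · rintro T ⟨f, hf, rfl⟩ T' hTT'
        refine ⟨f ⊔ chFun T', hF.1.2.1 f hf _ le_sup_left, ?_⟩
        rw [Finsupp.support_sup, supp_chFun, Finset.union_eq_right.mpr hTT']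
      · rintro S ⟨f, hf, rfl⟩ T ⟨g, hg, rfl⟩
        exact ⟨f ⊓ g, hF.1.2.2 f hf g hg, by rw [Finsupp.support_inf]; rfl⟩
    have hproper : SuppFilter F ≠ Set.univ := by
      intro h
      have : (∅ : Finset M) ∈ SuppFilter F := h ▸ Set.mem_univ _
      obtain ⟨f, hf, hsupp⟩ := this
      rw [Finsupp.support_eq_empty] at hsupp
      exact hF.2.1 (filter_univ_of_bot hF.1 (by rw [finsupp_bot_eq, ← hsupp]; exact hf))
    constructor
    · refine maximal_of_compl hfil hproper fun T hT => ?_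
      have hch : chFun T ∉ F := fun h => hT ⟨chFun T, h, supp_chFun T⟩
      obtain ⟨f, hf, hbot⟩ := compl_of_maximal hF (chFun T) hch
      refine ⟨f.support, ⟨f, hf, rfl⟩, ?_⟩
      rw [inf_eq_bot_iff, supp_chFun] at hbot
      rw [finset_bot_eq, Finset.inf_eq_inter, hbot]
    · ext g
      constructor
      · rintro ⟨T, ⟨f, hf, rfl⟩, hle⟩
        exact mem_of_supp_subset hF hf (chFun_le_iff.mp hle)
      · intro hg
        exact ⟨g.support, ⟨g, hg, rfl⟩, chFun_le_iff.mpr subset_rfl⟩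
  · intro 𝒮 h𝒮
    obtain ⟨S0, hS0⟩ := h𝒮.1.1
    have hfil : IsOrderFilter (ChFilter 𝒮) := by
      refine ⟨⟨chFun S0, S0, hS0, le_rfl⟩, ?_, ?_⟩
      · rintro f ⟨S, hS, hle⟩ g hfg; exact ⟨S, hS, hle.trans hfg⟩
      · rintro f ⟨S, hS, hSf⟩ g ⟨T, hT, hTg⟩
        refine ⟨S ∩ T, ?_, ?_⟩
        · have : S ⊓ T ∈ 𝒮 := h𝒮.1.2.2 S hS T hT
          rwa [Finset.inf_eq_inter] at this
        · rw [chFun_le_iff, Finsupp.support_inf]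
          exact Finset.inter_subset_inter (chFun_le_iff.mp hSf) (chFun_le_iff.mp hTg)
    have hproper : ChFilter 𝒮 ≠ Set.univ := by
      intro h
      have : (0 : M →₀ ℕ) ∈ ChFilter 𝒮 := h ▸ Set.mem_univ _
      obtain ⟨S, hS, hle⟩ := this
      have : S = ∅ := by
        have := chFun_le_iff.mp hle
        simpa using this
      exact h𝒮.2.1 (filter_univ_of_bot h𝒮.1 (by rw [finset_bot_eq, ← this]; exact hS))
    constructor
    · refine maximal_of_compl hfil hproper fun g hg => ?_
      have hsupp : g.support ∉ 𝒮 := fun h => hg ⟨g.support, h, chFun_le_iff.mpr subset_rfl⟩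
      obtain ⟨S, hS, hbot⟩ := compl_of_maximal h𝒮 g.support hsupp
      refine ⟨chFun S, ⟨S, hS, le_rfl⟩, ?_⟩
      rw [inf_eq_bot_iff, supp_chFun]
      rw [finset_bot_eq, Finset.inf_eq_inter] at hbot
      exact hbot
    · ext S
      constructor
      · rintro ⟨g, ⟨T, hT, hle⟩, rfl⟩
        exact h𝒮.1.2.1 T hT g.support (chFun_le_iff.mp hle)
      · intro hS
        exact ⟨chFun S, ⟨S, hS, le_rfl⟩, supp_chFun S⟩
end

section
/- Let A be a Dedekind domain with fraction field K and let W be a finite set of maximal ideals of A. Let S := {a ∈ A | a ∉ p for all p ∈ W}, a multiplicative submonoid of A. Then, as subrings of K, the localization S⁻¹A equals the intersection ⋂_{p ∈ W} A_p of the localizations of A at the primes p ∈ W; i.e., an element x ∈ K satisfies x ∈ A_p for all p ∈ W if and only if x = a/s for some a ∈ A and s ∈ S. -/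
/-- Let `A` be a Dedekind domain with fraction field `K` and `W` a finite set of
maximal ideals of `A`. With `S = {s ∈ A | s ∉ p for all p ∈ W}`, the localization
`S⁻¹A`, viewed inside `K`, equals the intersection `⋂_{p ∈ W} A_p` of the
localizations at the primes in `W`: an element `x ∈ K` lies in `A_p` for all
`p ∈ W` (i.e. `x = a/b` with `b ∉ p`) iff `x = a/s` with `s ∉ p` for all `p ∈ W`. -/
theorem localization_eq_iInter_of_dedekind (A : Type*) [CommRing A] [IsDomain A]
    [IsDedekindDomain A] (K : Type*) [Field K] [Algebra A K] [IsFractionRing A K]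
    (W : Finset (Ideal A)) (hW : ∀ p ∈ W, p.IsMaximal) (x : K) :
    (∀ p ∈ W, ∃ a b : A, b ∉ p ∧ x * algebraMap A K b = algebraMap A K a) ↔
      (∃ a s : A, (∀ p ∈ W, s ∉ p) ∧ x * algebraMap A K s = algebraMap A K a) := by
  constructor
  · intro h
    -- denominator ideal
    set I : Ideal A :=
      { carrier := {c | ∃ a : A, x * algebraMap A K c = algebraMap A K a}
        add_mem' := by
          rintro c d ⟨a, ha⟩ ⟨b, hb⟩
          exact ⟨a + b, by rw [map_add, map_add, mul_add, ha, hb]⟩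
        zero_mem' := ⟨0, by simp⟩
        smul_mem' := by
          rintro r c ⟨a, ha⟩
          exact ⟨r * a, by
            simp only [smul_eq_mul, map_mul]
            rw [mul_comm (algebraMap A K r), ← mul_assoc, ha, mul_comm]⟩ } with hI
    have hnot : ¬ ((I : Set A) ⊆ ⋃ p ∈ (W : Set (Ideal A)), (p : Set A)) := by
      rw [Ideal.subset_union_prime (⊥ : Ideal A) (⊥ : Ideal A)
        (fun p hp _ _ => (hW p hp).isPrime)]
      rintro ⟨p, hp, hle⟩
      obtain ⟨a, b, hb, hab⟩ := h p hp
      exact hb (hle ⟨a, hab⟩)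
    rw [Set.not_subset] at hnot
    obtain ⟨s, hs, hsn⟩ := hnot
    obtain ⟨a, ha⟩ := hs
    refine ⟨a, s, ?_, ha⟩
    intro p hp hsp
    exact hsn (Set.mem_biUnion hp hsp)
  · rintro ⟨a, s, hs, hx⟩ p hp
    exact ⟨a, s, hs p hp, hx⟩
end

section
/- Let B be a Prüfer domain with fraction field L, i.e., an integral domain such that for every prime ideal q of B the localization B_q, viewed as a subring of L, is a valuation ring of L. Let R be a valuation subring of L with B ⊆ R and R ≠ L (so the corresponding valuation is nontrivial), and let m_R denote the maximal ideal of R. Set p := m_R ∩ B. Then p is a nonzero prime ideal of B and R = B_p as subrings of L. -/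
/-!
Let `v` be the valuation of `R` and `p = {b ∈ B | v b < 1}`. If `b ∉ p` then `v b = 1`, so
`x b = a` forces `v x = v a ≤ 1`: this gives `B_p ⊆ R`. Conversely, for `x ∈ R` the Prüfer
property at `p` puts `x` or `x⁻¹` in `B_p`; in the second case `x a = b` with `b ∉ p`, and
`v b = v x · v a ≤ v a` shows `a ∉ p`, so again `x ∈ B_p`. Finally an element `x ∉ R` gives
`v x⁻¹ < 1`, and the numerator of `x⁻¹` is a nonzero element of `p`.
-/

open IsLocalRing

namespace ValuationSubring

variable {A K : Type*} [CommRing A] [Field K] [Algebra A K]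
  (R : ValuationSubring K) (hAR : ∀ a : A, algebraMap A K a ∈ R)

/-- The center `m_R ∩ A` of `R` on `A`. -/
def center : Ideal A :=
  (maximalIdeal R).comap ((algebraMap A K).codRestrict R.toSubring hAR)

instance : (R.center hAR).IsPrime := Ideal.comap_isPrime _ _

variable {R hAR}

theorem mem_center_iff {b : A} : b ∈ R.center hAR ↔ R.valuation (algebraMap A K b) < 1 :=
  valuation_lt_one_iff R ⟨_, hAR b⟩

theorem valuation_eq_one_of_notMem_center {b : A} (hb : b ∉ R.center hAR) :
    R.valuation (algebraMap A K b) = 1 :=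
  (valuation_lt_one_or_eq_one R ⟨_, hAR b⟩).resolve_left (mt mem_center_iff.mpr hb)

theorem mem_of_mul_algebraMap_eq {x : K} {a b : A} (hb : b ∉ R.center hAR)
    (hx : x * algebraMap A K b = algebraMap A K a) : x ∈ R := by
  have hv : R.valuation x = R.valuation (algebraMap A K a) := by
    rw [← hx, map_mul, valuation_eq_one_of_notMem_center hb, mul_one]
  rw [← valuation_le_one_iff, hv, valuation_le_one_iff]
  exact hAR a

theorem mul_algebraMap_eq_of_inv_mul_algebraMap_eq {x : K} {a b : A} (hxR : x ∈ R)
    (hx0 : x ≠ 0) (hb : b ∉ R.center hAR) (hx : x⁻¹ * algebraMap A K b = algebraMap A K a) :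
    a ∉ R.center hAR ∧ x * algebraMap A K a = algebraMap A K b := by
  have hxa : x * algebraMap A K a = algebraMap A K b := by
    rw [← hx, ← mul_assoc, mul_inv_cancel₀ hx0, one_mul]
  refine ⟨fun ha => hb (mem_center_iff.mpr ?_), hxa⟩
  calc R.valuation (algebraMap A K b) = R.valuation x * R.valuation (algebraMap A K a) := by
        rw [← hxa, map_mul]
    _ ≤ R.valuation (algebraMap A K a) :=
        mul_le_of_le_one_left' ((valuation_le_one_iff R x).mpr hxR)
    _ < 1 := mem_center_iff.mp ha

theorem center_ne_bot [IsFractionRing A K] (hR : R ≠ ⊤) : R.center hAR ≠ ⊥ := by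
  obtain ⟨x, hx⟩ := SetLike.exists_not_mem_of_ne_top R hR rfl
  obtain ⟨⟨a, b⟩, hab⟩ := IsLocalization.surj (nonZeroDivisors A) x⁻¹
  have hb0 : algebraMap A K b ≠ 0 := (IsLocalization.map_units K b).ne_zero
  have hx0 : x ≠ 0 := fun h => hx (h ▸ R.zero_mem)
  have hvx : R.valuation x⁻¹ < 1 := by
    rw [map_inv₀]
    exact inv_lt_one_of_one_lt₀ (not_le.mp (mt (valuation_le_one_iff R x).mp hx))
  have ha : a ∈ R.center hAR := by
    rw [mem_center_iff, ← hab, map_mul]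
    exact lt_of_le_of_lt (mul_le_of_le_one_right' (valuation_le_one R ⟨_, hAR b⟩)) hvx
  have ha0 : a ≠ 0 := by
    rintro rfl
    rw [map_zero] at hab
    exact mul_ne_zero (inv_ne_zero hx0) hb0 hab
  exact (Submodule.ne_bot_iff _).mpr ⟨a, ha, ha0⟩

end ValuationSubring

open ValuationSubring in
theorem valuationSubring_eq_localization_of_prufer_general
    (B L : Type*) [CommRing B] [Field L] [Algebra B L]
    [IsFractionRing B L]
    (hPrufer : ∀ q : Ideal B, q.IsPrime → ∀ x : L, x ≠ 0 →
      ((∃ a b : B, b ∉ q ∧ x * algebraMap B L b = algebraMap B L a) ∨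
       (∃ a b : B, b ∉ q ∧ x⁻¹ * algebraMap B L b = algebraMap B L a)))
    (R : ValuationSubring L) (hBR : ∀ b : B, algebraMap B L b ∈ R)
    (hR : R.toSubring ≠ ⊤)
    (p : Ideal B)
    (hp : p = (IsLocalRing.maximalIdeal R).comap
      ((algebraMap B L).codRestrict R.toSubring hBR)) :
    p ≠ ⊥ ∧ p.IsPrime ∧
      ∀ x : L, x ∈ R ↔ ∃ a b : B, b ∉ p ∧ x * algebraMap B L b = algebraMap B L a := by
  obtain rfl : p = R.center hBR := hp
  refine ⟨center_ne_bot fun h => hR (by rw [h]; rfl), inferInstance, fun x => ⟨fun hxR => ?_,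
    fun ⟨a, b, hb, hx⟩ => mem_of_mul_algebraMap_eq hb hx⟩⟩
  by_cases hx0 : x = 0
  · exact ⟨0, 1, Ideal.IsPrime.one_notMem inferInstance, by simp [hx0]⟩
  rcases hPrufer (R.center hBR) inferInstance x hx0 with hloc | ⟨a, b, hb, hx⟩
  · exact hloc
  · obtain ⟨ha, hxa⟩ := mul_algebraMap_eq_of_inv_mul_algebraMap_eq hxR hx0 hb hx
    exact ⟨b, a, ha, hxa⟩

/-- Let `B` be a Prüfer domain with fraction field `L`: for every prime ideal `q`
of `B`, the localization `B_q = {a/b | b ∉ q}` inside `L` is a valuation ring of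
`L`. If `R` is a valuation subring of `L` containing `B` with `R ≠ L` (so the
corresponding valuation is nontrivial) and `m_R` is its maximal ideal, then
`p = m_R ∩ B` is a nonzero prime ideal of `B` and `R = B_p` inside `L`. -/
theorem valuationSubring_eq_localization_of_prufer
    (B L : Type*) [CommRing B] [IsDomain B] [Field L] [Algebra B L]
    [IsFractionRing B L]
    (hPrufer : ∀ q : Ideal B, q.IsPrime → ∀ x : L, x ≠ 0 →
      ((∃ a b : B, b ∉ q ∧ x * algebraMap B L b = algebraMap B L a) ∨
       (∃ a b : B, b ∉ q ∧ x⁻¹ * algebraMap B L b = algebraMap B L a)))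
    (R : ValuationSubring L) (hBR : ∀ b : B, algebraMap B L b ∈ R)
    (hR : R.toSubring ≠ ⊤)
    (p : Ideal B)
    (hp : p = (IsLocalRing.maximalIdeal R).comap
      ((algebraMap B L).codRestrict R.toSubring hBR)) :
    p ≠ ⊥ ∧ p.IsPrime ∧
      ∀ x : L, x ∈ R ↔ ∃ a b : B, b ∉ p ∧ x * algebraMap B L b = algebraMap B L a :=
  valuationSubring_eq_localization_of_prufer_general B L hPrufer R hBR hR p hp
end
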